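/- For the quadratic system ẋ = 2(1 + 2x − 2ax² + 6xy), ẏ = 8 − 3a − 14ax − 2axy − 8y², the quartic curve f(x,y) = 1/4 + x − x² + ax³ + xy + x²y² = 0 is invariant with cofactor k(x,y) = 4(2 − 3ax + 2y); that is, P·f_x + Q·f_y = k·f identically. -/

import Mathlib

/-! The Fréchet derivative of `f` applied to the unit vectors gives the partial derivatives
`f_x = 1 - 2x + 3ax² + y + 2xy²` and `f_y = x + 2x²y`, after which `P f_x + Q f_y = k f`
is a polynomial identity in `x`, `y`, `a`. -/

section PartialDerivatives

variable {𝕜 : Type*} [NontriviallyNormedField 𝕜] {F : Type*} [NormedAddCommGroup F]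
  [NormedSpace 𝕜 F] {f : 𝕜 × 𝕜 → F} {p : 𝕜 × 𝕜}

theorem fderiv_apply_one_zero (hf : DifferentiableAt 𝕜 f p) :
    fderiv 𝕜 f p (1, 0) = deriv (fun x => f (x, p.2)) p.1 :=
  (hf.hasFDerivAt.comp_hasDerivAt p.1
    ((hasDerivAt_id p.1).prodMk (hasDerivAt_const p.1 p.2))).deriv.symm

theorem fderiv_apply_zero_one (hf : DifferentiableAt 𝕜 f p) :
    fderiv 𝕜 f p (0, 1) = deriv (fun y => f (p.1, y)) p.2 :=
  (hf.hasFDerivAt.comp_hasDerivAt p.2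
    ((hasDerivAt_const p.2 p.1).prodMk (hasDerivAt_id p.2))).deriv.symm

end PartialDerivatives

noncomputable def quartic (a : ℝ) (p : ℝ × ℝ) : ℝ :=
  1 / 4 + p.1 - p.1 ^ 2 + a * p.1 ^ 3 + p.1 * p.2 + p.1 ^ 2 * p.2 ^ 2

theorem differentiable_quartic (a : ℝ) : Differentiable ℝ (quartic a) := by
  unfold quartic
  fun_prop

theorem hasDerivAt_quartic_fst (a x y : ℝ) :
    HasDerivAt (fun x => quartic a (x, y)) (1 - 2 * x + 3 * a * x ^ 2 + y + 2 * x * y ^ 2) x :=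
  ((((((hasDerivAt_id' x).const_add (1 / 4)).sub (hasDerivAt_pow 2 x)).add
    ((hasDerivAt_pow 3 x).const_mul a)).add ((hasDerivAt_id' x).mul_const y)).add
    ((hasDerivAt_pow 2 x).mul_const (y ^ 2))).congr_deriv (by norm_num; ring)

theorem hasDerivAt_quartic_snd (a x y : ℝ) :
    HasDerivAt (fun y => quartic a (x, y)) (x + 2 * x ^ 2 * y) y :=
  (((hasDerivAt_const y (1 / 4 + x - x ^ 2 + a * x ^ 3)).add
    ((hasDerivAt_id' y).const_mul x)).add
    ((hasDerivAt_pow 2 y).const_mul (x ^ 2))).congr_deriv (by norm_num; ring)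

/-- For the quadratic system `ẋ = 2(1 + 2x − 2ax² + 6xy)`,
`ẏ = 8 − 3a − 14ax − 2axy − 8y²`, the quartic
`f(x,y) = 1/4 + x − x² + ax³ + xy + x²y²` defines an invariant algebraic curve with
cofactor `k(x,y) = 4(2 − 3ax + 2y)`. -/
theorem stmt_10 (a : ℝ)
    (P Q f k : ℝ × ℝ → ℝ)
    (hP : ∀ p : ℝ × ℝ, P p = 2 * (1 + 2 * p.1 - 2 * a * p.1 ^ 2 + 6 * p.1 * p.2))
    (hQ : ∀ p : ℝ × ℝ, Q p = 8 - 3 * a - 14 * a * p.1 - 2 * a * p.1 * p.2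
      - 8 * p.2 ^ 2)
    (hf : ∀ p : ℝ × ℝ, f p = 1 / 4 + p.1 - p.1 ^ 2 + a * p.1 ^ 3 + p.1 * p.2
      + p.1 ^ 2 * p.2 ^ 2)
    (hk : ∀ p : ℝ × ℝ, k p = 4 * (2 - 3 * a * p.1 + 2 * p.2)) :
    ∀ p : ℝ × ℝ, P p * fderiv ℝ f p (1, 0) + Q p * fderiv ℝ f p (0, 1)
      = k p * f p := by
  obtain rfl : f = quartic a := funext hf
  rintro ⟨x, y⟩
  rw [fderiv_apply_one_zero (differentiable_quartic a _),
    fderiv_apply_zero_one (differentiable_quartic a _),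
    (hasDerivAt_quartic_fst a x y).deriv, (hasDerivAt_quartic_snd a x y).deriv,
    hP, hQ, hk, quartic]
  ring
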